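/- Let r : (0,M) → (0,∞) be smooth, let s₀ ∈ (0,M) with r'(s₀) = 0 and r(s₀) minimal among critical values of r. If u is a unit vector at a point of the parallel P_{s₀} with |K(u)| < r(s₀), and if the geodesic γ_u is forward-asymptotic to an equator P_{s₊}, then r(s₊) = |K(u)| < r(s₀), contradicting minimality of r(s₀). Hence no geodesic starting on the Birkhoff annulus A of P_{s₀} transversally can be an asymptotic geodesic. -/
import Mathlib

/-- If `r(s₀)` is minimal among the critical values of `r` and `|κ| < r(s₀)`,
then there is no equator (critical point of `r`) of radius `|κ|`; hence no
geodesic with Clairaut constant `κ` starting on the Birkhoff annulus of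
`P_{s₀}` can be asymptotic to an equator. -/
theorem no_asymptotic_geodesic_from_minimal_equator
    (M : ℝ) (hM : 0 < M)
    (r : ℝ → ℝ) (hr : ContDiffOn ℝ (⊤ : ℕ∞) r (Set.Ioo 0 M))
    (hrpos : ∀ s ∈ Set.Ioo (0:ℝ) M, 0 < r s)
    (s₀ : ℝ) (hs₀ : s₀ ∈ Set.Ioo (0:ℝ) M) (hcrit : deriv r s₀ = 0)
    (hmin : ∀ s ∈ Set.Ioo (0:ℝ) M, deriv r s = 0 → r s₀ ≤ r s)
    (κ : ℝ) (hκ : |κ| < r s₀) :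
    ¬ ∃ sp ∈ Set.Ioo (0:ℝ) M, deriv r sp = 0 ∧ r sp = |κ| := by
  rintro ⟨sp, hsp, hspcrit, hspval⟩
  have := hmin sp hsp hspcrit
  rw [hspval] at this
  linarith
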